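/- arXiv:2405.01678 — 2 statements merged into one kernel-verified Lean document; each statement's English description precedes it below -/
import Mathlib

section
/- Let ε > 0, let N be a nonnegative integer, and define the truncation t : ℤ → ℤ by t(x) = x if 0 ≤ x ≤ N, t(x) = 0 if x < 0, and t(x) = N if x > N. For μ ∈ ℤ let g_μ(x) = ((exp ε − 1)/(exp ε + 1)) · exp(−ε·|x − μ|). Then for all a, b ∈ ℤ and every y ∈ ℤ, the fiber sums satisfy ∑_{x ∈ ℤ, t(x) = y} g_a(x) ≤ exp(ε·|a − b|) · ∑_{x ∈ ℤ, t(x) = y} g_b(x). (The truncated geometric mechanism t∘M satisfies ε·d_V-privacy.) -/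
/-- The two-sided geometric (discrete Laplace) mass function centered at `μ`
with privacy parameter `ε`. -/
noncomputable def geomMass (ε : ℝ) (μ x : ℤ) : ℝ :=
  ((Real.exp ε - 1) / (Real.exp ε + 1)) * Real.exp (-ε * ((|x - μ| : ℤ) : ℝ))

/-- The truncation function clamping an index to `[0, N]`. -/
def trunc (N : ℕ) (x : ℤ) : ℤ :=
  if x < 0 then 0 else if x > (N : ℤ) then (N : ℤ) else x

lemma summable_exp_neg_abs_int {ε : ℝ} (hε : 0 < ε) :
    Summable fun x : ℤ => Real.exp (-ε * ((|x| : ℤ) : ℝ)) := by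
  have hnat : Summable fun n : ℕ => Real.exp (-ε * n) := by
    have : ∀ n : ℕ, Real.exp (-ε * n) = (Real.exp (-ε)) ^ n := by
      intro n; rw [← Real.exp_nat_mul]; ring_nf
    simp_rw [this]
    exact summable_geometric_of_lt_one (Real.exp_nonneg _)
      (Real.exp_lt_one_iff.mpr (neg_neg_of_pos hε))
  apply Summable.of_nat_of_neg
  · simpa using hnat
  · simpa using hnat

lemma summable_shift {ε : ℝ} (hε : 0 < ε) (μ : ℤ) :
    Summable fun x : ℤ => Real.exp (-ε * ((|x - μ| : ℤ) : ℝ)) := by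
  refine Summable.of_nonneg_of_le (f := fun x : ℤ =>
      Real.exp (ε * ((|μ| : ℤ) : ℝ)) * Real.exp (-ε * ((|x| : ℤ) : ℝ)))
      (fun x => Real.exp_nonneg _) ?_ ?_
  · intro x
    rw [← Real.exp_add]
    apply Real.exp_le_exp.mpr
    have h : (|x - μ| : ℤ) ≥ |x| - |μ| := by
      have := abs_sub_abs_le_abs_sub x μ; linarith
    have h' : ((|x| : ℤ) : ℝ) - ((|μ| : ℤ) : ℝ) ≤ ((|x - μ| : ℤ) : ℝ) := by
      exact_mod_cast (by linarith : (|x| : ℤ) - |μ| ≤ |x - μ|)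
    nlinarith [hε.le]
  · exact (summable_exp_neg_abs_int hε).mul_left _

lemma summable_geomMass {ε : ℝ} (hε : 0 < ε) (μ : ℤ) :
    Summable fun x : ℤ => geomMass ε μ x :=
  (summable_shift hε μ).mul_left _

lemma geomMass_le {ε : ℝ} (hε : 0 < ε) (a b x : ℤ) :
    geomMass ε a x ≤ Real.exp (ε * ((|a - b| : ℤ) : ℝ)) * geomMass ε b x := by
  have hc : (0:ℝ) ≤ (Real.exp ε - 1) / (Real.exp ε + 1) :=
    div_nonneg (by nlinarith [Real.add_one_le_exp ε]) (by positivity)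
  unfold geomMass
  rw [mul_comm (Real.exp (ε * _)), mul_assoc]
  apply mul_le_mul_of_nonneg_left _ hc
  rw [← Real.exp_add]
  apply Real.exp_le_exp.mpr
  have h : (|x - a| : ℤ) ≥ |x - b| - |a - b| := by
    have := abs_sub_abs_le_abs_sub (x - b) (a - b)
    have h2 : (x - b) - (a - b) = x - a := by ring
    rw [h2] at this; linarith
  have h' : ((|x - b| : ℤ) : ℝ) - ((|a - b| : ℤ) : ℝ) ≤ ((|x - a| : ℤ) : ℝ) := by
    exact_mod_cast (by linarith : (|x - b| : ℤ) - |a - b| ≤ |x - a|)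
  nlinarith [hε.le]

/-- The truncated geometric mechanism satisfies `ε·d_V`-privacy: the fiber
sums of the geometric mass function under the truncation map obey the
multiplicative bound `exp (ε·|a − b|)`. -/
theorem truncated_geomMass_privacy (ε : ℝ) (hε : 0 < ε) (N : ℕ) (a b y : ℤ) :
    (∑' x : {x : ℤ // trunc N x = y}, geomMass ε a x) ≤
      Real.exp (ε * ((|a - b| : ℤ) : ℝ)) *
        ∑' x : {x : ℤ // trunc N x = y}, geomMass ε b x := by
  rw [← tsum_mul_left]
  exact Summable.tsum_le_tsum (fun x => geomMass_le hε a b x)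
    ((summable_geomMass hε a).subtype _)
    (((summable_geomMass hε b).mul_left _).subtype _)
end

section
/- Let ε > 0, let n ≥ 1 and k ≥ 1, let V be a type, and let f₁, …, f_k : V → ℤ be functions. For μ ∈ ℤ let g_μ(x) = ((exp ε − 1)/(exp ε + 1)) · exp(−ε·|x − μ|), and let m(w)(x) = (1/k) · ∑_{l=1}^{k} g_{f_l(w)}(x) be the multi-list mechanism mass. For sentences s = (w₁, …, wₙ) and s' = (w'₁, …, w'ₙ) in Vⁿ, define D(s, s') = ∑_{i=1}^{n} max_{1 ≤ l ≤ k} |f_l(w_i) − f_l(w'_i)|. If the mechanism is applied independently to each word, so that P[M(s) = z] = ∏_{i=1}^{n} m(w_i)(z_i) for z = (z₁, …, zₙ) ∈ ℤⁿ, then for all s, s' ∈ Vⁿ and all z ∈ ℤⁿ: ∏_{i=1}^{n} m(w_i)(z_i) ≤ exp(ε · D(s, s')) · ∏_{i=1}^{n} m(w'_i)(z_i). -/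
lemma geomMass_nonneg (ε : ℝ) (hε : 0 < ε) (μ x : ℤ) : 0 ≤ geomMass ε μ x := by
  unfold geomMass
  have h1 : (1 : ℝ) < Real.exp ε := by
    have := Real.exp_lt_exp.mpr hε; simpa using this
  have h2 : 0 ≤ Real.exp ε - 1 := by linarith
  have h3 : 0 < Real.exp ε + 1 := by positivity
  positivity

lemma geomMass_ratio (ε : ℝ) (hε : 0 < ε) (μ μ' x : ℤ) :
    geomMass ε μ x ≤ Real.exp (ε * ((|μ - μ'| : ℤ) : ℝ)) * geomMass ε μ' x := by
  unfold geomMass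
  have hc : 0 ≤ (Real.exp ε - 1) / (Real.exp ε + 1) := by
    have h1 : (1 : ℝ) < Real.exp ε := by
      have := Real.exp_lt_exp.mpr hε; simpa using this
    have h2 : 0 ≤ Real.exp ε - 1 := by linarith
    have h3 : 0 < Real.exp ε + 1 := by positivity
    positivity
  rw [mul_comm (Real.exp _), mul_assoc]
  apply mul_le_mul_of_nonneg_left _ hc
  rw [← Real.exp_add]
  apply Real.exp_le_exp.mpr
  have htri : (|x - μ| : ℤ) ≥ |x - μ'| - |μ - μ'| := by
    have := abs_sub_abs_le_abs_sub (x - μ') (x - μ)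
    have h2 : (x - μ') - (x - μ) = μ - μ' := by ring
    rw [h2] at this
    linarith
  have htri' : ((|x - μ'| : ℤ) : ℝ) - ((|μ - μ'| : ℤ) : ℝ) ≤ ((|x - μ| : ℤ) : ℝ) := by
    exact_mod_cast htri
  nlinarith [hε.le]

/-- Sentence-level privacy: applying the multi-list geometric mechanism
independently to each of the `n` words of a sentence satisfies `ε·D`-privacy
for equal-length sentences, where
`D(s, s') = ∑ i, max_l |f_l(s i) − f_l(s' i)|`. -/
theorem sentence_privacy (ε : ℝ) (hε : 0 < ε) (n k : ℕ) (hn : 0 < n) (hk : 0 < k)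
    {V : Type*} (f : Fin k → V → ℤ) (s s' : Fin n → V) (z : Fin n → ℤ) :
    (∏ i : Fin n, (1 / (k : ℝ)) * ∑ l : Fin k, geomMass ε (f l (s i)) (z i)) ≤
      Real.exp (ε * ((∑ i : Fin n, Finset.univ.sup' ⟨⟨0, hk⟩, Finset.mem_univ _⟩
          (fun l : Fin k => |f l (s i) - f l (s' i)|) : ℤ) : ℝ)) *
        ∏ i : Fin n, (1 / (k : ℝ)) * ∑ l : Fin k, geomMass ε (f l (s' i)) (z i) := by
  set ne : Finset.Nonempty (Finset.univ : Finset (Fin k)) := ⟨⟨0, hk⟩, Finset.mem_univ _⟩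
  have key : ∀ i : Fin n,
      (1 / (k : ℝ)) * ∑ l : Fin k, geomMass ε (f l (s i)) (z i) ≤
      Real.exp (ε * ((Finset.univ.sup' ne
          (fun l : Fin k => |f l (s i) - f l (s' i)|) : ℤ) : ℝ)) *
        ((1 / (k : ℝ)) * ∑ l : Fin k, geomMass ε (f l (s' i)) (z i)) := by
    intro i
    set d : ℤ := Finset.univ.sup' ne (fun l : Fin k => |f l (s i) - f l (s' i)|) with hd
    have hre : Real.exp (ε * (d : ℝ)) * ((1 / (k : ℝ)) * ∑ l : Fin k, geomMass ε (f l (s' i)) (z i))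
        = (1 / (k : ℝ)) * (Real.exp (ε * (d : ℝ)) * ∑ l : Fin k, geomMass ε (f l (s' i)) (z i)) := by
      ring
    rw [hre]
    apply mul_le_mul_of_nonneg_left _ (by positivity)
    rw [Finset.mul_sum]
    apply Finset.sum_le_sum
    intro l _
    calc geomMass ε (f l (s i)) (z i)
        ≤ Real.exp (ε * ((|f l (s i) - f l (s' i)| : ℤ) : ℝ)) * geomMass ε (f l (s' i)) (z i) :=
          geomMass_ratio ε hε _ _ _
      _ ≤ Real.exp (ε * (d : ℝ)) * geomMass ε (f l (s' i)) (z i) := by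
          apply mul_le_mul_of_nonneg_right _ (geomMass_nonneg ε hε _ _)
          apply Real.exp_le_exp.mpr
          apply mul_le_mul_of_nonneg_left _ hε.le
          exact_mod_cast Finset.le_sup' (fun l : Fin k => |f l (s i) - f l (s' i)|)
            (Finset.mem_univ l)
  calc (∏ i : Fin n, (1 / (k : ℝ)) * ∑ l : Fin k, geomMass ε (f l (s i)) (z i))
      ≤ ∏ i : Fin n, Real.exp (ε * ((Finset.univ.sup' ne
            (fun l : Fin k => |f l (s i) - f l (s' i)|) : ℤ) : ℝ)) *
          ((1 / (k : ℝ)) * ∑ l : Fin k, geomMass ε (f l (s' i)) (z i)) := by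
        apply Finset.prod_le_prod
        · intro i _
          have : ∀ l ∈ Finset.univ, 0 ≤ geomMass ε (f l (s i)) (z i) :=
            fun l _ => geomMass_nonneg ε hε _ _
          have hs := Finset.sum_nonneg this
          positivity
        · intro i _; exact key i
    _ = Real.exp (ε * ((∑ i : Fin n, Finset.univ.sup' ne
            (fun l : Fin k => |f l (s i) - f l (s' i)|) : ℤ) : ℝ)) *
          ∏ i : Fin n, (1 / (k : ℝ)) * ∑ l : Fin k, geomMass ε (f l (s' i)) (z i) := by
        rw [Finset.prod_mul_distrib, ← Real.exp_sum]
        congr 1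
        push_cast
        rw [Finset.mul_sum]
end
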